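/- Let G be a graph of order n whose vertex independence number satisfies α(G) = 2, i.e., the maximum cardinality of an independent set of vertices of G equals 2. Then IC(G) = n. -/

import Mathlib

namespace ICNL

variable {V : Type*}

/-- `S` is a dominating set of `G`. -/
def Dominating (G : SimpleGraph V) (S : Set V) : Prop :=
  ∀ v : V, v ∈ S ∨ ∃ u ∈ S, G.Adj u v

/-- `S` is an independent set of `G`. -/
def IndepSet (G : SimpleGraph V) (S : Set V) : Prop :=
  ∀ ⦃u : V⦄, u ∈ S → ∀ ⦃v : V⦄, v ∈ S → ¬ G.Adj u v

/-- `S` is an independent dominating set of `G`. -/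
def IndepDom (G : SimpleGraph V) (S : Set V) : Prop :=
  IndepSet G S ∧ Dominating G S

/-- `A` and `B` form an independent coalition in `G`. -/
def ICCoalition (G : SimpleGraph V) (A B : Set V) : Prop :=
  Disjoint A B ∧ IndepSet G A ∧ IndepSet G B ∧
    ¬ IndepDom G A ∧ ¬ IndepDom G B ∧ IndepDom G (A ∪ B)

/-- `π` is a partition of the vertex set into nonempty classes. -/
def IsPartition (π : Finset (Finset V)) : Prop :=
  (∀ A ∈ π, A.Nonempty) ∧ ∀ v : V, ∃! A : Finset V, A ∈ π ∧ v ∈ A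

/-- `π` is an independent coalition partition of `G`. -/
def IsICPartition (G : SimpleGraph V) (π : Finset (Finset V)) : Prop :=
  IsPartition π ∧
    ∀ A ∈ π, (∃ v : V, (A : Set V) = {v} ∧ Dominating G (A : Set V)) ∨
      (¬ IndepDom G (A : Set V) ∧
        ∃ B ∈ π, B ≠ A ∧ ICCoalition G (A : Set V) (B : Set V))

/-- The independent coalition number: the maximum number of classes of an
ic-partition of `G`. -/
noncomputable def IC (G : SimpleGraph V) : ℕ :=
  sSup {k | ∃ π : Finset (Finset V), IsICPartition G π ∧ π.card = k}


/-- The vertex independence number: the maximum cardinality of an independent set of `G`. -/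
noncomputable def indepNumber (G : SimpleGraph V) : ℕ :=
  sSup {k | ∃ S : Set V, IndepSet G S ∧ S.ncard = k}

/-!
If `α(G) ≤ 2`, any two nonadjacent vertices dominate `G`: a vertex missed by both would complete
an independent triple. So in the partition into singletons, a class `{v}` either dominates on its
own or misses some `w`, and then `{v}` and `{w}` form an independent coalition. No partition has
more than `n` classes, hence `IC(G) = n`.
-/

section

variable {G : SimpleGraph V}

theorem indepSet_singleton (v : V) : IndepSet G {v} := by
  rintro _ rfl _ rfl h
  exact G.loopless.irrefl _ h

theorem indepSet_pair {v w : V} (h : ¬G.Adj v w) : IndepSet G {v, w} := by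
  rintro a (rfl | rfl) b (rfl | rfl)
  exacts [G.loopless.irrefl _, h, fun h' => h h'.symm, G.loopless.irrefl _]

theorem IndepSet.ncard_le_indepNumber [Finite V] {S : Set V} (hS : IndepSet G S) :
    S.ncard ≤ indepNumber G := by
  refine le_csSup ⟨Nat.card V, ?_⟩ ⟨S, hS, rfl⟩
  rintro k ⟨T, -, rfl⟩
  exact T.ncard_le_card

theorem dominating_pair_of_indepNumber_le_two [Finite V] (hα : indepNumber G ≤ 2) {v w : V}
    (hvw : v ≠ w) (hadj : ¬G.Adj v w) : Dominating G {v, w} := by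
  intro x
  by_contra! hx
  simp only [Set.mem_insert_iff, Set.mem_singleton_iff, not_or] at hx
  obtain ⟨⟨hxv, hxw⟩, hxadj⟩ := hx
  have hvx : ¬G.Adj v x := hxadj v (by simp)
  have hwx : ¬G.Adj w x := hxadj w (by simp)
  have hind : IndepSet G {v, w, x} := by
    rintro a (rfl | rfl | rfl) b (rfl | rfl | rfl) hab
    all_goals first
      | exact G.loopless.irrefl _ hab
      | exact hadj hab | exact hvx hab | exact hwx hab
      | exact hadj hab.symm | exact hvx hab.symm | exact hwx hab.symm
  have hcard : ({v, w, x} : Set V).ncard = 3 :=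
    Set.ncard_eq_three.2 ⟨v, w, x, hvw, Ne.symm hxv, Ne.symm hxw, rfl⟩
  have := hind.ncard_le_indepNumber
  omega

theorem not_dominating_singleton {v w : V} (hvw : v ≠ w) (hadj : ¬G.Adj v w) :
    ¬Dominating G {w} := by
  intro hdom
  rcases hdom v with rfl | ⟨u, rfl, hwv⟩
  exacts [hvw rfl, hadj hwv.symm]

theorem icCoalition_singleton_singleton {v w : V} (hvw : v ≠ w) (hadj : ¬G.Adj v w)
    (hdom : Dominating G {v, w}) : ICCoalition G {v} {w} :=
  ⟨Set.disjoint_singleton.2 hvw, indepSet_singleton v, indepSet_singleton w,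
    fun h => not_dominating_singleton hvw.symm (fun h' => hadj h'.symm) h.2,
    fun h => not_dominating_singleton hvw hadj h.2, indepSet_pair hadj, hdom⟩

def singletonPartition (V : Type*) [Fintype V] : Finset (Finset V) :=
  Finset.univ.map ⟨singleton, Finset.singleton_injective⟩

theorem mem_singletonPartition [Fintype V] {A : Finset V} :
    A ∈ singletonPartition V ↔ ∃ v, A = {v} := by
  simp [singletonPartition, eq_comm]

theorem card_singletonPartition [Fintype V] :
    (singletonPartition V).card = Fintype.card V := by
  simp [singletonPartition]

theorem isPartition_singletonPartition [Fintype V] : IsPartition (singletonPartition V) := by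
  refine ⟨fun A hA => ?_, fun v => ⟨{v}, ⟨mem_singletonPartition.2 ⟨v, rfl⟩, by simp⟩, ?_⟩⟩
  · obtain ⟨v, rfl⟩ := mem_singletonPartition.1 hA
    exact Finset.singleton_nonempty v
  · rintro B ⟨hB, hvB⟩
    obtain ⟨u, rfl⟩ := mem_singletonPartition.1 hB
    rw [Finset.mem_singleton.1 hvB]

theorem isICPartition_singletonPartition [Fintype V] (hα : indepNumber G ≤ 2) :
    IsICPartition G (singletonPartition V) := by
  refine ⟨isPartition_singletonPartition, fun A hA => ?_⟩
  obtain ⟨v, rfl⟩ := mem_singletonPartition.1 hA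
  rw [Finset.coe_singleton]
  by_cases hd : Dominating G {v}
  · exact Or.inl ⟨v, rfl, hd⟩
  obtain ⟨w, hw⟩ : ∃ w, ¬(w ∈ ({v} : Set V) ∨ ∃ u ∈ ({v} : Set V), G.Adj u w) := by
    simpa [Dominating] using hd
  simp only [Set.mem_singleton_iff, exists_eq_left, not_or] at hw
  obtain ⟨hwv, hadj⟩ := hw
  refine Or.inr ⟨fun h => hd h.2, {w}, mem_singletonPartition.2 ⟨w, rfl⟩,
    by simpa using hwv, ?_⟩
  rw [Finset.coe_singleton]
  exact icCoalition_singleton_singleton (Ne.symm hwv) hadj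
    (dominating_pair_of_indepNumber_le_two hα (Ne.symm hwv) hadj)

theorem IsPartition.card_le [Fintype V] {π : Finset (Finset V)} (hπ : IsPartition π) :
    π.card ≤ Fintype.card V := by
  choose f hf using hπ.1
  have hinj : Function.Injective (fun A : π => f A A.2) := by
    rintro ⟨A, hA⟩ ⟨B, hB⟩ hAB
    obtain ⟨C, -, hC⟩ := hπ.2 (f A hA)
    have hfB : f A hA ∈ B := by simpa [hAB] using hf B hB
    exact Subtype.ext ((hC A ⟨hA, hf A hA⟩).trans (hC B ⟨hB, hfB⟩).symm)
  simpa using Fintype.card_le_of_injective _ hinj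

theorem IC_le_card [Fintype V] : IC G ≤ Fintype.card V := by
  refine csSup_le' ?_
  rintro k ⟨π, hπ, rfl⟩
  exact hπ.1.card_le

theorem card_le_IC [Fintype V] {π : Finset (Finset V)} (hπ : IsICPartition G π) :
    π.card ≤ IC G :=
  le_csSup ⟨Fintype.card V, fun _ ⟨_, hσ, hk⟩ => hk ▸ hσ.1.card_le⟩ ⟨π, hπ, rfl⟩

end

theorem stmt_17 {V : Type*} [Fintype V] (G : SimpleGraph V) (n : ℕ)
    (hn : Fintype.card V = n) (hα : indepNumber G = 2) :
    IC G = n := by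
  subst hn
  refine le_antisymm IC_le_card ?_
  simpa [card_singletonPartition] using card_le_IC (isICPartition_singletonPartition hα.le)

end ICNL
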